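/- arXiv:2004.12491 — 4 statements merged into one kernel-verified Lean document; each statement's English description precedes it below -/
import Mathlib

section
/- The function f(x) = [1+(1-δx)²]·(β^α/Γ(α))·x^(α-1)·e^(-βx)/Z integrates to 1 over (0,∞), where Z = 2 + (αδ/β)[(1+α)δ/β - 2]. -/
open MeasureTheory Real Set

noncomputable def Zc (α β δ : ℝ) : ℝ := 2 + (α * δ / β) * ((1 + α) * δ / β - 2)

noncomputable def bgammaPDF (α β δ x : ℝ) : ℝ :=
  (1 + (1 - δ * x) ^ 2) / Zc α β δ * (β ^ α / Real.Gamma α) * x ^ (α - 1) * Real.exp (-β * x)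

noncomputable def gammaPDF (α β x : ℝ) : ℝ :=
  β ^ α / Real.Gamma α * x ^ (α - 1) * Real.exp (-β * x)

/-!
With `g` the Gamma(α, β) density, `bgammaPDF = (1 + (1 - δx)²) g / Zc`. Expanding the square,
the numerator integrates to `2 - 2δ E[Y] + δ² E[Y²]` with `E[Yⁿ] = Γ(α + n) / (Γ(α) βⁿ)`,
which is exactly `Zc`; and `Zc = (1 - αδ/β)² + 1 + α(δ/β)² > 0`.
-/

lemma Zc_pos {α : ℝ} (hα : 0 ≤ α) (β δ : ℝ) : 0 < Zc α β δ := by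
  rw [show Zc α β δ = (1 - α * (δ / β)) ^ 2 + 1 + α * (δ / β) ^ 2 by unfold Zc; ring]
  positivity

lemma pow_mul_gammaPDF_eq {x : ℝ} (hx : 0 < x) (α β : ℝ) (n : ℕ) :
    x ^ n * gammaPDF α β x = β ^ α / Gamma α * (x ^ (α + n - 1) * exp (-(β * x))) := by
  rw [gammaPDF, add_sub_right_comm, rpow_add_natCast hx.ne', neg_mul]
  ring

section Moments

variable {α β : ℝ}

lemma integrableOn_pow_mul_gammaPDF (hα : 0 < α) (hβ : 0 < β) (n : ℕ) :
    IntegrableOn (fun x ↦ x ^ n * gammaPDF α β x) (Ioi 0) := by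
  have h := integrableOn_rpow_mul_exp_neg_mul_rpow (s := α + n - 1)
    (by linarith [n.cast_nonneg (α := ℝ)]) one_pos hβ
  refine IntegrableOn.congr_fun (h.const_mul (β ^ α / Gamma α)) (fun x hx ↦ ?_)
    measurableSet_Ioi
  rw [pow_mul_gammaPDF_eq hx, rpow_one, neg_mul]

lemma integral_pow_mul_gammaPDF (hα : 0 < α) (hβ : 0 < β) (n : ℕ) :
    ∫ x in Ioi 0, x ^ n * gammaPDF α β x = Gamma (α + n) / (Gamma α * β ^ n) := by
  rw [setIntegral_congr_fun measurableSet_Ioi (fun x hx ↦ pow_mul_gammaPDF_eq hx α β n),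
    integral_const_mul, integral_rpow_mul_exp_neg_mul_Ioi (by positivity) hβ,
    rpow_add_natCast (by positivity), one_div, inv_rpow hβ.le, inv_pow]
  field_simp [(Gamma_pos_of_pos hα).ne', (rpow_pos_of_pos hβ α).ne']

lemma integral_gammaPDF (hα : 0 < α) (hβ : 0 < β) : ∫ x in Ioi 0, gammaPDF α β x = 1 := by
  simpa [(Gamma_pos_of_pos hα).ne'] using integral_pow_mul_gammaPDF hα hβ 0

lemma integral_mul_gammaPDF (hα : 0 < α) (hβ : 0 < β) :
    ∫ x in Ioi 0, x * gammaPDF α β x = α / β := by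
  have h := integral_pow_mul_gammaPDF hα hβ 1
  simp only [Nat.cast_one, Gamma_add_one hα.ne', pow_one] at h
  rw [h]
  field_simp [(Gamma_pos_of_pos hα).ne']

lemma integral_sq_mul_gammaPDF (hα : 0 < α) (hβ : 0 < β) :
    ∫ x in Ioi 0, x ^ 2 * gammaPDF α β x = α * (α + 1) / β ^ 2 := by
  have h := integral_pow_mul_gammaPDF hα hβ 2
  rw [Nat.cast_two, show α + 2 = α + 1 + 1 by ring, Gamma_add_one (by positivity),
    Gamma_add_one hα.ne'] at h
  rw [h]
  field_simp [(Gamma_pos_of_pos hα).ne']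

lemma integral_one_add_sq_mul_gammaPDF (hα : 0 < α) (hβ : 0 < β) (δ : ℝ) :
    ∫ x in Ioi 0, (1 + (1 - δ * x) ^ 2) * gammaPDF α β x = Zc α β δ := by
  have h0 := integrableOn_pow_mul_gammaPDF hα hβ 0
  have h1 := integrableOn_pow_mul_gammaPDF hα hβ 1
  have h2 := integrableOn_pow_mul_gammaPDF hα hβ 2
  simp only [pow_zero, one_mul, pow_one] at h0 h1
  have h01 : IntegrableOn (fun x ↦ 2 * gammaPDF α β x - 2 * δ * (x * gammaPDF α β x)) (Ioi 0) :=
    (h0.const_mul _).sub (h1.const_mul _)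
  have expand : ∀ x, (1 + (1 - δ * x) ^ 2) * gammaPDF α β x
      = 2 * gammaPDF α β x - 2 * δ * (x * gammaPDF α β x) + δ ^ 2 * (x ^ 2 * gammaPDF α β x) := by
    intro x
    ring
  simp_rw [expand]
  rw [integral_add h01 (h2.const_mul _),
    integral_sub (h0.const_mul _) (h1.const_mul _), integral_const_mul, integral_const_mul,
    integral_const_mul, integral_gammaPDF hα hβ, integral_mul_gammaPDF hα hβ,
    integral_sq_mul_gammaPDF hα hβ, Zc]
  field_simp
  ring

end Moments

lemma bgammaPDF_eq_mul_gammaPDF_div (α β δ : ℝ) :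
    bgammaPDF α β δ = fun x ↦ (1 + (1 - δ * x) ^ 2) * gammaPDF α β x / Zc α β δ := by
  ext x
  rw [bgammaPDF, gammaPDF]
  ring

theorem bgamma_integral_one (α β δ : ℝ) (hα : 0 < α) (hβ : 0 < β) :
    ∫ x in Ioi (0:ℝ), bgammaPDF α β δ x = 1 := by
  simp only [bgammaPDF_eq_mul_gammaPDF_div]
  rw [integral_div, integral_one_add_sq_mul_gammaPDF hα hβ,
    div_self (Zc_pos hα.le β δ).ne']
end

section
/- If α ≤ 1, δ > 0 and 0 < x < 1/δ, then the BGamma density f(x;α,β,δ) is decreasing in x on this interval. -/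
open MeasureTheory Real Set

theorem bgamma_decreasing (α β δ : ℝ) (hα0 : 0 < α) (hα : α ≤ 1) (hβ : 0 < β) (hδ : 0 < δ) :
    StrictAntiOn (bgammaPDF α β δ) (Ioo 0 (1 / δ)) := by
  intro x hx y hy hxy
  obtain ⟨hx0, hxd⟩ := hx
  obtain ⟨hy0, hyd⟩ := hy
  have ht : 0 < δ / β := div_pos hδ hβ
  have hZ : 0 < Zc α β δ := by
    unfold Zc
    generalize hT : δ / β = t at ht ⊢
    rw [show 2 + α * δ / β * ((1 + α) * δ / β - 2) = 2 - 2 * α * (δ / β) + α * (1 + α) * (δ / β) ^ 2 by ring, hT]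
    nlinarith [mul_nonneg hα0.le (sq_nonneg ((1 + α) * t - 1)), mul_pos hα0 ht]
  have hG : 0 < Real.Gamma α := Real.Gamma_pos_of_pos hα0
  have hK : 0 < β ^ α / Real.Gamma α := div_pos (Real.rpow_pos_of_pos hβ α) hG
  have h1y : 0 < 1 - δ * y := by
    have := (lt_div_iff₀ hδ).mp hyd
    nlinarith
  have h1x : 0 < 1 - δ * x := by nlinarith
  have hdd : δ * x < δ * y := by nlinarith
  have hg : 1 + (1 - δ * y) ^ 2 < 1 + (1 - δ * x) ^ 2 := by
    nlinarith [mul_pos (sub_pos.mpr hdd) h1y, mul_pos (sub_pos.mpr hdd) h1x]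
  have hp : y ^ (α - 1) ≤ x ^ (α - 1) :=
    Real.rpow_le_rpow_of_nonpos hx0 hxy.le (by linarith)
  have he : Real.exp (-β * y) < Real.exp (-β * x) := by
    apply Real.exp_lt_exp.mpr; nlinarith
  have hpy : 0 < y ^ (α - 1) := Real.rpow_pos_of_pos hy0 _
  have hPy : 0 < y ^ (α - 1) * Real.exp (-β * y) := mul_pos hpy (Real.exp_pos _)
  have hPle : y ^ (α - 1) * Real.exp (-β * y) ≤ x ^ (α - 1) * Real.exp (-β * x) :=
    mul_le_mul hp he.le (Real.exp_pos _).le (le_of_lt (Real.rpow_pos_of_pos hx0 _))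
  have key : (1 + (1 - δ * y) ^ 2) * (y ^ (α - 1) * Real.exp (-β * y)) <
      (1 + (1 - δ * x) ^ 2) * (x ^ (α - 1) * Real.exp (-β * x)) :=
    mul_lt_mul hg hPle hPy (by positivity)
  have ey : bgammaPDF α β δ y =
      (β ^ α / Real.Gamma α / Zc α β δ) *
        ((1 + (1 - δ * y) ^ 2) * (y ^ (α - 1) * Real.exp (-β * y))) := by
    unfold bgammaPDF; ring
  have ex : bgammaPDF α β δ x =
      (β ^ α / Real.Gamma α / Zc α β δ) *
        ((1 + (1 - δ * x) ^ 2) * (x ^ (α - 1) * Real.exp (-β * x))) := by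
    unfold bgammaPDF; ring
  rw [ey, ex]
  exact mul_lt_mul_of_pos_left key (div_pos hK hZ)
end

section
/- For δ > β > 0 and α = 1, the quadratic βδ²x² − 2δ(δ+β)x + 2(δ+β) = 0 has two distinct positive roots x₁ = (δ+β−√(δ²−β²))/(βδ) < x₂ = (δ+β+√(δ²−β²))/(βδ), and the BGamma density decreases on (0,x₁), increases on (x₁,x₂), and decreases on (x₂,∞). -/
open MeasureTheory Real Set

/-!
For `α = 1` the density is a positive constant times `(1 + (1 - δx)²) e^{-βx}`, whose derivative
is `-e^{-βx} q(x)` with `q(x) = βδ²x² - 2δ(δ+β)x + 2(δ+β)`. For `δ > β > 0` the quadratic `q`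
has discriminant `4δ²(δ² - β²) > 0` and factors as `βδ²(x - x₁)(x - x₂)` with `0 < x₁ < x₂`,
so the density decreases where `q > 0` and increases where `q < 0`.
-/

def bgammaQuad (β δ x : ℝ) : ℝ :=
  β * δ ^ 2 * x ^ 2 - 2 * δ * (δ + β) * x + 2 * (δ + β)

/-- With `t = δ / β` this is `2 (t² - t + 1)`; it also holds for `β = 0`, where `t = 0`. -/
lemma Zc_one_pos (β δ : ℝ) : 0 < Zc 1 β δ := by
  have h : Zc 1 β δ = 2 * (δ / β) ^ 2 - 2 * (δ / β) + 2 := by unfold Zc; ring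
  rw [h]
  nlinarith [sq_nonneg (δ / β - 1), sq_nonneg (δ / β)]

lemma bgammaPDF_one (β δ x : ℝ) :
    bgammaPDF 1 β δ x = β / Zc 1 β δ * ((1 + (1 - δ * x) ^ 2) * exp (-β * x)) := by
  simp only [bgammaPDF, Real.Gamma_one, Real.rpow_one, sub_self, Real.rpow_zero]
  ring

lemma hasDerivAt_bgammaPDF_one (β δ x : ℝ) :
    HasDerivAt (bgammaPDF 1 β δ)
      (-(β / Zc 1 β δ * exp (-β * x)) * bgammaQuad β δ x) x := by
  have hpoly : HasDerivAt (fun x : ℝ => 1 + (1 - δ * x) ^ 2) (2 * (1 - δ * x) * (-δ)) x := by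
    simpa using ((((hasDerivAt_id x).const_mul δ).const_sub 1).pow 2).const_add 1
  have hexp : HasDerivAt (fun x : ℝ => exp (-β * x)) (exp (-β * x) * (-β)) x := by
    simpa using ((hasDerivAt_id x).const_mul (-β)).exp
  rw [funext (bgammaPDF_one β δ)]
  refine ((hpoly.mul hexp).const_mul (β / Zc 1 β δ)).congr_deriv ?_
  unfold bgammaQuad
  ring

lemma strictAntiOn_bgammaPDF_one {β δ : ℝ} (hβ : 0 < β) {D : Set ℝ} (hD : Convex ℝ D)
    (hq : ∀ x ∈ interior D, 0 < bgammaQuad β δ x) :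
    StrictAntiOn (bgammaPDF 1 β δ) D := by
  refine strictAntiOn_of_hasDerivWithinAt_neg hD
    (fun x _ => (hasDerivAt_bgammaPDF_one β δ x).continuousAt.continuousWithinAt)
    (fun x _ => (hasDerivAt_bgammaPDF_one β δ x).hasDerivWithinAt) fun x hx => ?_
  have hc : 0 < β / Zc 1 β δ * exp (-β * x) := by have := Zc_one_pos β δ; positivity
  nlinarith [hq x hx]

lemma strictMonoOn_bgammaPDF_one {β δ : ℝ} (hβ : 0 < β) {D : Set ℝ} (hD : Convex ℝ D)
    (hq : ∀ x ∈ interior D, bgammaQuad β δ x < 0) :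
    StrictMonoOn (bgammaPDF 1 β δ) D := by
  refine strictMonoOn_of_hasDerivWithinAt_pos hD
    (fun x _ => (hasDerivAt_bgammaPDF_one β δ x).continuousAt.continuousWithinAt)
    (fun x _ => (hasDerivAt_bgammaPDF_one β δ x).hasDerivWithinAt) fun x hx => ?_
  have hc : 0 < β / Zc 1 β δ * exp (-β * x) := by have := Zc_one_pos β δ; positivity
  nlinarith [hq x hx]

lemma bgammaQuad_eq_mul {β δ s : ℝ} (hβ : β ≠ 0) (hδ : δ ≠ 0) (hs : s ^ 2 = δ ^ 2 - β ^ 2)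
    (x : ℝ) :
    bgammaQuad β δ x = β * δ ^ 2 * (x - (δ + β - s) / (β * δ)) * (x - (δ + β + s) / (β * δ)) := by
  unfold bgammaQuad
  field_simp
  linear_combination hs

theorem bgamma_bimodal_shape_alpha_one (β δ : ℝ) (hβ : 0 < β) (hδ : β < δ) :
    let x₁ := (δ + β - Real.sqrt (δ ^ 2 - β ^ 2)) / (β * δ)
    let x₂ := (δ + β + Real.sqrt (δ ^ 2 - β ^ 2)) / (β * δ)
    0 < x₁ ∧ x₁ < x₂ ∧
    β * δ ^ 2 * x₁ ^ 2 - 2 * δ * (δ + β) * x₁ + 2 * (δ + β) = 0 ∧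
    β * δ ^ 2 * x₂ ^ 2 - 2 * δ * (δ + β) * x₂ + 2 * (δ + β) = 0 ∧
    StrictAntiOn (bgammaPDF 1 β δ) (Ioo 0 x₁) ∧
    StrictMonoOn (bgammaPDF 1 β δ) (Ioo x₁ x₂) ∧
    StrictAntiOn (bgammaPDF 1 β δ) (Ici x₂) := by
  intro x₁ x₂
  have hδ₀ : 0 < δ := hβ.trans hδ
  have hdisc : 0 < δ ^ 2 - β ^ 2 := by nlinarith
  have hs : sqrt (δ ^ 2 - β ^ 2) ^ 2 = δ ^ 2 - β ^ 2 := sq_sqrt hdisc.le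
  have hs_pos : 0 < sqrt (δ ^ 2 - β ^ 2) := sqrt_pos.mpr hdisc
  have hs_lt : sqrt (δ ^ 2 - β ^ 2) < δ + β := by nlinarith
  have hq (x : ℝ) : bgammaQuad β δ x = β * δ ^ 2 * (x - x₁) * (x - x₂) :=
    bgammaQuad_eq_mul hβ.ne' hδ₀.ne' hs x
  have ha : 0 < β * δ ^ 2 := by positivity
  have hx₁ : 0 < x₁ := div_pos (by linarith) (by positivity)
  have hx₁₂ : x₁ < x₂ := div_lt_div_of_pos_right (by linarith) (by positivity)
  refine ⟨hx₁, hx₁₂, ?_, ?_, ?_, ?_, ?_⟩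
  · simpa [bgammaQuad] using hq x₁
  · simpa [bgammaQuad] using hq x₂
  · refine strictAntiOn_bgammaPDF_one hβ (convex_Ioo 0 x₁) fun x hx => ?_
    rw [interior_Ioo] at hx
    rw [hq]
    exact mul_pos_of_neg_of_neg (mul_neg_of_pos_of_neg ha (by linarith [hx.2])) (by linarith [hx.2])
  · refine strictMonoOn_bgammaPDF_one hβ (convex_Ioo x₁ x₂) fun x hx => ?_
    rw [interior_Ioo] at hx
    rw [hq]
    exact mul_neg_of_pos_of_neg (mul_pos ha (by linarith [hx.1])) (by linarith [hx.2])
  · refine strictAntiOn_bgammaPDF_one hβ (convex_Ici x₂) fun x hx => ?_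
    rw [interior_Ici, mem_Ioi] at hx
    rw [hq]
    exact mul_pos (mul_pos ha (by linarith)) (by linarith)
end

section
/- If X ~ BGamma(α,β,δ) and ν > −α is real, then E[X^ν] = [2 − 2(δ/β)(ν+α) + (δ²/β²)(ν+α)(ν+α+1)] · Γ(ν+α) / (Z β^ν Γ(α)), where Z = 2 + (αδ/β)[(1+α)δ/β − 2]. -/
open MeasureTheory Real Set

/-!
Since `1 + (1 - δx)² = 2 - 2δx + δ²x²`, the `ν`-th moment of `BGamma(α, β, δ)` is `1/Z` times a
combination of the Gamma moments of orders `ν`, `ν + 1`, `ν + 2`, and these are all multiples of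
the `ν`-th one via `Γ(s + 1) = s Γ(s)`.
-/

section GammaMoments

variable {α β ν : ℝ}

lemma rpow_mul_gammaPDF {x : ℝ} (hx : 0 < x) :
    x ^ ν * gammaPDF α β x = β ^ α / Gamma α * (x ^ (ν + α - 1) * exp (-(β * x))) := by
  rw [gammaPDF, show ν + α - 1 = ν + (α - 1) by ring, rpow_add hx, neg_mul]
  ring

lemma integrableOn_rpow_mul_gammaPDF (hβ : 0 < β) (hνα : 0 < ν + α) :
    IntegrableOn (fun x ↦ x ^ ν * gammaPDF α β x) (Ioi 0) := by
  have h := integrableOn_rpow_mul_exp_neg_mul_rpow (p := 1) (s := ν + α - 1) (by linarith)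
    one_pos hβ
  refine IntegrableOn.congr_fun (h.const_mul (β ^ α / Gamma α)) (fun x hx ↦ ?_)
    measurableSet_Ioi
  rw [rpow_mul_gammaPDF hx, rpow_one, neg_mul]

lemma integral_rpow_mul_gammaPDF (hβ : 0 < β) (hνα : 0 < ν + α) :
    ∫ x in Ioi (0:ℝ), x ^ ν * gammaPDF α β x = Gamma (ν + α) / (β ^ ν * Gamma α) := by
  rw [setIntegral_congr_fun measurableSet_Ioi fun x hx ↦ rpow_mul_gammaPDF hx,
    integral_const_mul, integral_rpow_mul_exp_neg_mul_Ioi hνα hβ, div_rpow zero_le_one hβ.le,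
    one_rpow, rpow_add hβ]
  field_simp

lemma integral_rpow_add_one_mul_gammaPDF (hβ : 0 < β) (hνα : 0 < ν + α) :
    ∫ x in Ioi (0:ℝ), x ^ (ν + 1) * gammaPDF α β x =
      (ν + α) / β * ∫ x in Ioi (0:ℝ), x ^ ν * gammaPDF α β x := by
  rw [integral_rpow_mul_gammaPDF hβ (by linarith), integral_rpow_mul_gammaPDF hβ hνα,
    show ν + 1 + α = (ν + α) + 1 by ring, Gamma_add_one hνα.ne', rpow_add_one hβ.ne']
  field_simp

end GammaMoments

lemma bgammaPDF_eq_mul_gammaPDF (α β δ x : ℝ) :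
    bgammaPDF α β δ x = (2 - 2 * δ * x + δ ^ 2 * x ^ 2) / Zc α β δ * gammaPDF α β x := by
  rw [bgammaPDF, gammaPDF]
  ring

lemma rpow_mul_bgammaPDF (α β δ ν : ℝ) {x : ℝ} (hx : 0 < x) :
    x ^ ν * bgammaPDF α β δ x =
      (2 * (x ^ ν * gammaPDF α β x) - 2 * δ * (x ^ (ν + 1) * gammaPDF α β x)
        + δ ^ 2 * (x ^ (ν + 1 + 1) * gammaPDF α β x)) / Zc α β δ := by
  rw [bgammaPDF_eq_mul_gammaPDF, rpow_add_one hx.ne', rpow_add_one hx.ne', rpow_add_one hx.ne']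
  ring

theorem bgamma_moments_general (α β δ ν : ℝ) (hβ : 0 < β) (hν : -α < ν) :
    ∫ x in Ioi (0:ℝ), x ^ ν * bgammaPDF α β δ x =
      (2 - 2 * (δ / β) * (ν + α) + (δ / β) ^ 2 * (ν + α) * (ν + α + 1)) *
        Real.Gamma (ν + α) / (Zc α β δ * β ^ ν * Real.Gamma α) := by
  have h0 : 0 < ν + α := by linarith
  have h1 : 0 < ν + 1 + α := by linarith
  have i0 := integrableOn_rpow_mul_gammaPDF (α := α) hβ h0
  have i1 := integrableOn_rpow_mul_gammaPDF (α := α) hβ h1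
  have i2 := integrableOn_rpow_mul_gammaPDF (α := α) (ν := ν + 1 + 1) hβ (by linarith)
  rw [setIntegral_congr_fun measurableSet_Ioi fun x hx ↦ rpow_mul_bgammaPDF α β δ ν hx,
    integral_div, integral_add _ (i2.const_mul _), integral_sub (i0.const_mul _) (i1.const_mul _),
    integral_const_mul, integral_const_mul, integral_const_mul,
    integral_rpow_add_one_mul_gammaPDF hβ h1, integral_rpow_add_one_mul_gammaPDF hβ h0,
    integral_rpow_mul_gammaPDF hβ h0]
  · ring
  · exact (i0.const_mul _).sub (i1.const_mul _)

theorem bgamma_moments (α β δ ν : ℝ) (hα : 0 < α) (hβ : 0 < β) (hν : -α < ν) :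
    ∫ x in Ioi (0:ℝ), x ^ ν * bgammaPDF α β δ x =
      (2 - 2 * (δ / β) * (ν + α) + (δ / β) ^ 2 * (ν + α) * (ν + α + 1)) *
        Real.Gamma (ν + α) / (Zc α β δ * β ^ ν * Real.Gamma α) :=
  bgamma_moments_general α β δ ν hβ hν
end
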